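/- arXiv:2107.04661 — 2 statements merged into one kernel-verified Lean document; each statement's English description precedes it below -/
import Mathlib

section
/- (Theorem 1, Hölder bound on confounding bias.) Under the stated setup, let p, q ∈ [1, ∞] be conjugate exponents (1/p + 1/q = 1). If the function (π_t − π) belongs to L^p(μ) and the function u ↦ m(u) − E[Y|t] belongs to L^q(μ), then |E[Y|t] − E[Y|do(t)]| ≤ ‖π_t − π‖_{L^p(μ)} · ‖m − E[Y|t]‖_{L^q(μ)}, i.e., the confounding bias is bounded by the product of the treatment sensitivity parameter B^p_{UT}(t) = (∫ |π_t(u) − π(u)|^p dμ(u))^{1/p} and the outcome sensitivity parameter B^q_{UY}(t) = (∫ |m(u) − E[Y|t]|^q dμ(u))^{1/q}. -/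
open MeasureTheory
open scoped ENNReal

/-! Since `π_t` and `π` have the same total mass, subtracting the constant `E[Y|t]` from `m`
does not change `∫ m (π_t - π) dμ`, so the bias is `∫ (m - E[Y|t]) (π_t - π) dμ`, to which
Hölder's inequality applies. -/

namespace MeasureTheory

variable {α : Type*} [MeasurableSpace α] {μ : Measure α}

theorem abs_integral_mul_le_eLpNorm_mul_eLpNorm {p q : ℝ≥0∞} [p.HolderConjugate q]
    {f g : α → ℝ} (hf : MemLp f p μ) (hg : MemLp g q μ) :
    |∫ x, f x * g x ∂μ| ≤ (eLpNorm f p μ).toReal * (eLpNorm g q μ).toReal := by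
  have hfg : AEStronglyMeasurable (fun x => f x * g x) μ := hf.1.mul hg.1
  calc |∫ x, f x * g x ∂μ| ≤ ∫ x, ‖f x * g x‖ ∂μ :=
      norm_integral_le_integral_norm (fun x => f x * g x)
    _ = (eLpNorm (fun x => f x * g x) 1 μ).toReal := by
      rw [toReal_eLpNorm hfg, lpNorm_one_eq_integral_norm hfg]
    _ ≤ (eLpNorm f p μ * eLpNorm g q μ).toReal :=
      ENNReal.toReal_mono (ENNReal.mul_ne_top hf.eLpNorm_ne_top hg.eLpNorm_ne_top)
        (eLpNorm_smul_le_mul_eLpNorm (f := g) (φ := f) hg.1 hf.1)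
    _ = (eLpNorm f p μ).toReal * (eLpNorm g q μ).toReal := ENNReal.toReal_mul

theorem integral_mul_sub_integral_mul_eq_integral_sub_mul_sub {m ρ ρ' : α → ℝ} (c : ℝ)
    (hρ : Integrable ρ μ) (hρ' : Integrable ρ' μ) (hmass : ∫ x, ρ x ∂μ = ∫ x, ρ' x ∂μ)
    (hmρ : Integrable (fun x => m x * ρ x) μ) (hmρ' : Integrable (fun x => m x * ρ' x) μ) :
    (∫ x, m x * ρ x ∂μ) - ∫ x, m x * ρ' x ∂μ = ∫ x, (m x - c) * (ρ x - ρ' x) ∂μ := by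
  have hexpand : (fun x => (m x - c) * (ρ x - ρ' x))
      = fun x => (m x * ρ x - m x * ρ' x) - c * (ρ x - ρ' x) := by
    funext x; ring
  have hdiff : Integrable (fun x => m x * ρ x - m x * ρ' x) μ := hmρ.sub hmρ'
  have hcdiff : Integrable (fun x => c * (ρ x - ρ' x)) μ := (hρ.sub hρ').const_mul c
  rw [hexpand, integral_sub hdiff hcdiff, integral_sub hmρ hmρ',
    integral_const_mul, integral_sub hρ hρ', hmass, sub_self, mul_zero, sub_zero]

end MeasureTheory

theorem holder_bound_confounding_bias_general
    {𝒰 : Type*} [MeasurableSpace 𝒰] (μ : Measure 𝒰)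
    (π πt m : 𝒰 → ℝ)
    (hπ_one : ∫ u, π u ∂μ = 1) (hπt_one : ∫ u, πt u ∂μ = 1)
    (hmπ : Integrable (fun u => m u * π u) μ)
    (hmπt : Integrable (fun u => m u * πt u) μ)
    (p q : ℝ≥0∞) (hpq : 1 / p + 1 / q = 1)
    (hUT : MemLp (fun u => πt u - π u) p μ)
    (hUY : MemLp (fun u => m u - ∫ v, m v * πt v ∂μ) q μ) :
    |(∫ u, m u * πt u ∂μ) - ∫ u, m u * π u ∂μ|
      ≤ (eLpNorm (fun u => πt u - π u) p μ).toReal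
        * (eLpNorm (fun u => m u - ∫ v, m v * πt v ∂μ) q μ).toReal := by
  have : q.HolderConjugate p :=
    ENNReal.holderConjugate_iff.mpr (by simpa only [one_div, add_comm] using hpq)
  rw [integral_mul_sub_integral_mul_eq_integral_sub_mul_sub (∫ v, m v * πt v ∂μ)
    (integrable_of_integral_eq_one hπt_one) (integrable_of_integral_eq_one hπ_one)
    (hπt_one.trans hπ_one.symm) hmπt hmπ, mul_comm]
  exact abs_integral_mul_le_eLpNorm_mul_eLpNorm hUY hUT

/-- Theorem 1 (Hölder bound on the confounding bias): for conjugate exponents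
`p, q ∈ [1, ∞]`, `|E[Y|t] − E[Y|do(t)]| ≤ ‖π_t − π‖_p · ‖m − E[Y|t]‖_q`. -/
theorem holder_bound_confounding_bias
    {𝒰 : Type*} [MeasurableSpace 𝒰] (μ : Measure 𝒰) [SigmaFinite μ]
    (π πt m : 𝒰 → ℝ)
    (hπ_meas : Measurable π) (hπt_meas : Measurable πt) (hm_meas : Measurable m)
    (hπ_nonneg : ∀ u, 0 ≤ π u) (hπt_nonneg : ∀ u, 0 ≤ πt u)
    (hπ_one : ∫ u, π u ∂μ = 1) (hπt_one : ∫ u, πt u ∂μ = 1)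
    (hmπ : Integrable (fun u => m u * π u) μ)
    (hmπt : Integrable (fun u => m u * πt u) μ)
    (p q : ℝ≥0∞) (hpq : 1 / p + 1 / q = 1)
    (hUT : MemLp (fun u => πt u - π u) p μ)
    (hUY : MemLp (fun u => m u - ∫ v, m v * πt v ∂μ) q μ) :
    |(∫ u, m u * πt u ∂μ) - ∫ u, m u * π u ∂μ|
      ≤ (eLpNorm (fun u => πt u - π u) p μ).toReal
        * (eLpNorm (fun u => m u - ∫ v, m v * πt v ∂μ) q μ).toReal :=
  holder_bound_confounding_bias_general μ π πt m hπ_one hπt_one hmπ hmπt p q hpq hUT hUY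
end

section
/- (Corollary 2, ATE interval bound.) Under the two-treatment setup, if for each i ∈ {1, 2} the function π_{t_i} − π is μ-integrable and the function u ↦ m_i(u) − E[Y|t_i] is essentially bounded with respect to μ, then the true treatment effect τ_ATE := E[Y|do(t_1)] − E[Y|do(t_2)] satisfies τ_igno − W ≤ τ_ATE ≤ τ_igno + W, where τ_igno := E[Y|t_1] − E[Y|t_2] and the half-width is W := (∫ |π_{t_1} − π| dμ) · essSup_u |m_1(u) − E[Y|t_1]| + (∫ |π_{t_2} − π| dμ) · essSup_u |m_2(u) − E[Y|t_2]|. -/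
/-!
For each treatment, `E[Y|t] - E[Y|do(t)] = ∫ m (π_t - π)`. Since `π_t` and `π` both integrate to one, `m` may be
replaced there by `m - c` for any constant `c`; taking `c = E[Y|t]`, Hölder's inequality with the
exponents `1` and `∞` bounds each confounding bias by `(∫ |π_t - π|) · essSup |m - E[Y|t]|`, and the
two biases add up to at most `W`.
-/

open MeasureTheory

section

variable {α : Type*} [MeasurableSpace α] {μ : Measure α}

theorem abs_integral_mul_le_integral_abs_mul_essSup {f g : α → ℝ}
    (hf : Filter.IsBoundedUnder (· ≤ ·) (ae μ) fun x => |f x|) (hg : Integrable g μ) :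
    |∫ x, f x * g x ∂μ| ≤ (∫ x, |g x| ∂μ) * essSup (fun x => |f x|) μ := by
  have hle : ∀ᵐ x ∂μ, ‖f x * g x‖ ≤ essSup (fun x => |f x|) μ * |g x| := by
    filter_upwards [ae_le_essSup hf] with x hx
    rw [Real.norm_eq_abs, abs_mul]
    exact mul_le_mul_of_nonneg_right hx (abs_nonneg _)
  calc |∫ x, f x * g x ∂μ| ≤ ∫ x, essSup (fun x => |f x|) μ * |g x| ∂μ :=
        norm_integral_le_of_norm_le (hg.abs.const_mul _) hle
    _ = (∫ x, |g x| ∂μ) * essSup (fun x => |f x|) μ := by rw [integral_const_mul, mul_comm]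

theorem integral_mul_sub_integral_mul_eq_integral_sub_const_mul {m p q : α → ℝ} (c : ℝ)
    (hmp : Integrable (fun x => m x * p x) μ) (hmq : Integrable (fun x => m x * q x) μ)
    (hpq : Integrable (fun x => p x - q x) μ) (hpq_zero : ∫ x, p x - q x ∂μ = 0) :
    (∫ x, m x * p x ∂μ) - ∫ x, m x * q x ∂μ = ∫ x, (m x - c) * (p x - q x) ∂μ := by
  have hsplit : (fun x => (m x - c) * (p x - q x))
      = fun x => (m x * p x - m x * q x) - c * (p x - q x) := by
    funext x; ring
  have hmpq : Integrable (fun x => m x * p x - m x * q x) μ := hmp.sub hmq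
  rw [hsplit, integral_sub hmpq (hpq.const_mul c), integral_sub hmp hmq,
    integral_const_mul, hpq_zero, mul_zero, sub_zero]

theorem integral_sub_eq_zero_of_integral_eq_one {p q : α → ℝ}
    (hp : ∫ x, p x ∂μ = 1) (hq : ∫ x, q x ∂μ = 1) : ∫ x, p x - q x ∂μ = 0 := by
  have hp_int : Integrable p μ := .of_integral_ne_zero (by rw [hp]; exact one_ne_zero)
  have hq_int : Integrable q μ := .of_integral_ne_zero (by rw [hq]; exact one_ne_zero)
  rw [integral_sub hp_int hq_int, hp, hq, sub_self]

theorem abs_integral_mul_sub_integral_mul_le {m p q : α → ℝ}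
    (hp : ∫ x, p x ∂μ = 1) (hq : ∫ x, q x ∂μ = 1)
    (hmp : Integrable (fun x => m x * p x) μ) (hmq : Integrable (fun x => m x * q x) μ)
    (hpq : Integrable (fun x => p x - q x) μ) {c : ℝ}
    (hm : ∃ C : ℝ, ∀ᵐ x ∂μ, |m x - c| ≤ C) :
    |(∫ x, m x * p x ∂μ) - ∫ x, m x * q x ∂μ|
      ≤ (∫ x, |p x - q x| ∂μ) * essSup (fun x => |m x - c|) μ := by
  rw [integral_mul_sub_integral_mul_eq_integral_sub_const_mul c hmp hmq hpq
    (integral_sub_eq_zero_of_integral_eq_one hp hq)]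
  exact abs_integral_mul_le_integral_abs_mul_essSup hm hpq

end

theorem ate_interval_bound_general
    {𝒰 : Type*} [MeasurableSpace 𝒰] (μ : Measure 𝒰)
    (π πt₁ πt₂ m₁ m₂ : 𝒰 → ℝ)
    (hπ_one : ∫ u, π u ∂μ = 1)
    (hπt₁_one : ∫ u, πt₁ u ∂μ = 1) (hπt₂_one : ∫ u, πt₂ u ∂μ = 1)
    (hm₁π : Integrable (fun u => m₁ u * π u) μ)
    (hm₂π : Integrable (fun u => m₂ u * π u) μ)
    (hm₁πt₁ : Integrable (fun u => m₁ u * πt₁ u) μ)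
    (hm₂πt₂ : Integrable (fun u => m₂ u * πt₂ u) μ)
    (hUT₁ : Integrable (fun u => πt₁ u - π u) μ)
    (hUT₂ : Integrable (fun u => πt₂ u - π u) μ)
    (hUY₁ : ∃ C : ℝ, ∀ᵐ u ∂μ, |m₁ u - ∫ v, m₁ v * πt₁ v ∂μ| ≤ C)
    (hUY₂ : ∃ C : ℝ, ∀ᵐ u ∂μ, |m₂ u - ∫ v, m₂ v * πt₂ v ∂μ| ≤ C)
    (τATE τigno W : ℝ)
    (hτATE : τATE = (∫ u, m₁ u * π u ∂μ) - ∫ u, m₂ u * π u ∂μ)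
    (hτigno : τigno = (∫ u, m₁ u * πt₁ u ∂μ) - ∫ u, m₂ u * πt₂ u ∂μ)
    (hW : W = (∫ u, |πt₁ u - π u| ∂μ)
          * essSup (fun u => |m₁ u - ∫ v, m₁ v * πt₁ v ∂μ|) μ
        + (∫ u, |πt₂ u - π u| ∂μ)
          * essSup (fun u => |m₂ u - ∫ v, m₂ v * πt₂ v ∂μ|) μ) :
    τigno - W ≤ τATE ∧ τATE ≤ τigno + W := by
  have bias₁ := abs_le.mp <|
    abs_integral_mul_sub_integral_mul_le hπt₁_one hπ_one hm₁πt₁ hm₁π hUT₁ hUY₁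
  have bias₂ := abs_le.mp <|
    abs_integral_mul_sub_integral_mul_le hπt₂_one hπ_one hm₂πt₂ hm₂π hUT₂ hUY₂
  subst hτATE hτigno hW
  constructor <;> linarith [bias₁.1, bias₁.2, bias₂.1, bias₂.2]

/-- Corollary 2 (ATE interval bound): the true treatment effect lies in the
interval `[τ_igno − W, τ_igno + W]`, where
`W = (∫|π_{t₁}−π|)·essSup|m₁−E[Y|t₁]| + (∫|π_{t₂}−π|)·essSup|m₂−E[Y|t₂]|`. -/
theorem ate_interval_bound
    {𝒰 : Type*} [MeasurableSpace 𝒰] (μ : Measure 𝒰) [SigmaFinite μ]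
    (π πt₁ πt₂ m₁ m₂ : 𝒰 → ℝ)
    (hπ_meas : Measurable π) (hπt₁_meas : Measurable πt₁)
    (hπt₂_meas : Measurable πt₂)
    (hm₁_meas : Measurable m₁) (hm₂_meas : Measurable m₂)
    (hπ_nonneg : ∀ u, 0 ≤ π u) (hπt₁_nonneg : ∀ u, 0 ≤ πt₁ u)
    (hπt₂_nonneg : ∀ u, 0 ≤ πt₂ u)
    (hπ_one : ∫ u, π u ∂μ = 1)
    (hπt₁_one : ∫ u, πt₁ u ∂μ = 1) (hπt₂_one : ∫ u, πt₂ u ∂μ = 1)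
    (hm₁π : Integrable (fun u => m₁ u * π u) μ)
    (hm₂π : Integrable (fun u => m₂ u * π u) μ)
    (hm₁πt₁ : Integrable (fun u => m₁ u * πt₁ u) μ)
    (hm₂πt₂ : Integrable (fun u => m₂ u * πt₂ u) μ)
    (hUT₁ : Integrable (fun u => πt₁ u - π u) μ)
    (hUT₂ : Integrable (fun u => πt₂ u - π u) μ)
    (hUY₁ : ∃ C : ℝ, ∀ᵐ u ∂μ, |m₁ u - ∫ v, m₁ v * πt₁ v ∂μ| ≤ C)
    (hUY₂ : ∃ C : ℝ, ∀ᵐ u ∂μ, |m₂ u - ∫ v, m₂ v * πt₂ v ∂μ| ≤ C)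
    (τATE τigno W : ℝ)
    (hτATE : τATE = (∫ u, m₁ u * π u ∂μ) - ∫ u, m₂ u * π u ∂μ)
    (hτigno : τigno = (∫ u, m₁ u * πt₁ u ∂μ) - ∫ u, m₂ u * πt₂ u ∂μ)
    (hW : W = (∫ u, |πt₁ u - π u| ∂μ)
          * essSup (fun u => |m₁ u - ∫ v, m₁ v * πt₁ v ∂μ|) μ
        + (∫ u, |πt₂ u - π u| ∂μ)
          * essSup (fun u => |m₂ u - ∫ v, m₂ v * πt₂ v ∂μ|) μ) :
    τigno - W ≤ τATE ∧ τATE ≤ τigno + W :=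
  ate_interval_bound_general μ π πt₁ πt₂ m₁ m₂ hπ_one hπt₁_one hπt₂_one hm₁π hm₂π hm₁πt₁ hm₂πt₂ hUT₁
    hUT₂ hUY₁ hUY₂ τATE τigno W hτATE hτigno hW
end
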